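/- arXiv:2207.09401 — 3 statements merged into one kernel-verified Lean document; each statement's English description precedes it below -/
import Mathlib

section
/- Let d ≥ 2, p ≥ 2, D a bounded subset of R^d, and D_ε = D/ε ∩ Z^d. Then ∑ over pairwise distinct v₁,...,v_p ∈ D_ε of (∏_{i=1}^{p-1} |v_i - v_{i+1}|^{-d}) · |v_p - v₁|^{-d} is O(ε^{-p/2 - d + 1}) as ε → 0, with implied constant depending on D, d and p. -/
/-!
Write `p = q + 1` and let `aᵢ = |vᵢ - vᵢ₊₁|` be the cyclic gaps of a configuration of distinct
lattice points; they lie in `[1, R]` with `R ≍ diam D / ε`. For `p ≥ 3` the closing gap is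
dropped (`a_p^{-d} ≤ 1`) and each of the `q` remaining gaps gives up a power `t = (q-1)/(2q)`:
`a^{-d} ≤ R^t a^{-(d+t)}`. For `p = 2` the two gaps coincide and the product is `a₁^{-2d}`.
Either way the `q` chain gaps `v_{j+1} - v_j` carry an exponent `e > d`, so summing over the
starting point (`O(ε^{-d})` lattice points of `D/ε`) and then over each successive difference
(a convergent lattice sum `∑ |u|^{-e}`) gives `O(ε^{-d} R^{(q-1)/2}) = O(ε^{-p/2-d+1})`.
-/

open Finset

section Lattice

variable {d : ℕ}

def euclideanOfInt (u : Fin d → ℤ) : EuclideanSpace ℝ (Fin d) :=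
  WithLp.toLp 2 fun m => (u m : ℝ)

lemma euclideanOfInt_injective : Function.Injective (euclideanOfInt (d := d)) :=
  fun _ _ h => funext fun m => Int.cast_injective (α := ℝ) (congrArg (fun x => x m) h)

lemma euclideanOfInt_sub (u w : Fin d → ℤ) :
    euclideanOfInt (u - w) = euclideanOfInt u - euclideanOfInt w := by
  ext m; simp [euclideanOfInt]

lemma norm_euclideanOfInt (u : Fin d → ℤ) :
    ‖euclideanOfInt u‖ = √(∑ m, ((u m : ℝ)) ^ 2) := by
  simp [euclideanOfInt, EuclideanSpace.norm_eq]

lemma norm_euclideanOfInt_sub (u w : Fin d → ℤ) :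
    ‖euclideanOfInt (u - w)‖ = √(∑ m, ((u m : ℝ) - (w m : ℝ)) ^ 2) := by
  simp [norm_euclideanOfInt]

lemma one_le_norm_euclideanOfInt {u : Fin d → ℤ} (hu : u ≠ 0) : 1 ≤ ‖euclideanOfInt u‖ := by
  obtain ⟨m, hm⟩ := Function.ne_iff.mp hu
  calc (1 : ℝ) ≤ |(u m : ℝ)| := by exact_mod_cast Int.one_le_abs hm
    _ = ‖euclideanOfInt u m‖ := by simp [euclideanOfInt]
    _ ≤ ‖euclideanOfInt u‖ := PiLp.norm_apply_le _ m

lemma norm_euclideanOfInt_le {u : Fin d → ℤ} {r : ℝ} (hr : 0 ≤ r)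
    (hu : ∀ m, |(u m : ℝ)| ≤ r) : ‖euclideanOfInt u‖ ≤ √d * r := by
  rw [norm_euclideanOfInt, ← Real.sqrt_sq hr, ← Real.sqrt_mul (Nat.cast_nonneg d)]
  gcongr
  calc ∑ m, ((u m : ℝ)) ^ 2 ≤ ∑ _m : Fin d, r ^ 2 :=
        sum_le_sum fun m _ => sq_le_sq' (abs_le.mp (hu m)).1 (abs_le.mp (hu m)).2
    _ = d * r ^ 2 := by simp

lemma norm_euclideanOfInt_sub_le {u w : Fin d → ℤ} {r : ℝ} (hr : 0 ≤ r)
    (hu : ∀ m, |(u m : ℝ)| ≤ r) (hw : ∀ m, |(w m : ℝ)| ≤ r) :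
    ‖euclideanOfInt (u - w)‖ ≤ √d * (2 * r) :=
  norm_euclideanOfInt_le (by positivity) fun m => by
    rw [Pi.sub_apply, Int.cast_sub]
    linarith [abs_sub (u m : ℝ) (w m), hu m, hw m]

lemma abs_le_div_of_norm_mul_le {u : Fin d → ℤ} {ε M : ℝ} (hε : 0 < ε)
    (hu : ‖fun m => ε * (u m : ℝ)‖ ≤ M) (m : Fin d) : |(u m : ℝ)| ≤ M / ε := by
  rw [le_div_iff₀ hε, ← abs_of_pos hε, ← abs_mul, mul_comm]
  exact (norm_le_pi_norm _ m).trans hu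

lemma euclideanOfInt_mem_span (u : Fin d → ℤ) :
    euclideanOfInt u ∈
      Submodule.span ℤ (Set.range (EuclideanSpace.basisFun (Fin d) ℝ).toBasis) := by
  have : euclideanOfInt u = ∑ m, u m • (EuclideanSpace.basisFun (Fin d) ℝ).toBasis m := by
    ext m; simp [euclideanOfInt, Pi.single_apply]
  rw [this]
  exact Submodule.sum_mem _ fun m _ => Submodule.smul_mem _ _ (Submodule.subset_span ⟨m, rfl⟩)

lemma summable_norm_euclideanOfInt_rpow {e : ℝ} (he : d < e) :
    Summable fun u : Fin d → ℤ => ‖euclideanOfInt u‖ ^ (-e) := by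
  let L := Submodule.span ℤ (Set.range (EuclideanSpace.basisFun (Fin d) ℝ).toBasis)
  have hrank : Module.finrank ℤ L = d := by
    rw [ZLattice.rank ℝ L, finrank_euclideanSpace_fin]
  let ι : (Fin d → ℤ) → L := fun u => ⟨euclideanOfInt u, euclideanOfInt_mem_span u⟩
  have hinj : Function.Injective ι := fun _ _ h =>
    euclideanOfInt_injective (congrArg Subtype.val h)
  have hL : Summable fun z : L => ‖z‖ ^ (-e) :=
    ZLattice.summable_norm_rpow L (-e) (by rw [hrank]; linarith)
  have hsum := hL.comp_injective hinj
  exact hsum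

lemma card_le_of_forall_abs_le {r : ℝ} (hr : 0 ≤ r) (S : Finset (Fin d → ℤ))
    (hS : ∀ v ∈ S, ∀ m, |(v m : ℝ)| ≤ r) : (#S : ℝ) ≤ (2 * r + 1) ^ d := by
  have hsub : S ⊆ Fintype.piFinset fun _ => Icc (-⌊r⌋) ⌊r⌋ := fun v hv => by
    simp only [Fintype.mem_piFinset, mem_Icc, neg_le, Int.le_floor]
    intro m
    have := abs_le.mp (hS v hv m)
    push_cast
    constructor <;> linarith
  have hfloor : (0 : ℤ) ≤ ⌊r⌋ := Int.floor_nonneg.mpr hr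
  calc (#S : ℝ) ≤ #(Fintype.piFinset fun _ : Fin d => Icc (-⌊r⌋) ⌊r⌋) := by
        exact_mod_cast card_le_card hsub
    _ = (2 * ⌊r⌋ + 1 : ℤ) ^ d := by
        rw [Fintype.card_piFinset, prod_const, card_univ, Fintype.card_fin, Int.card_Icc,
          Nat.cast_pow, ← Int.cast_natCast, Int.toNat_of_nonneg (by omega)]
        ring_nf
    _ ≤ (2 * r + 1) ^ d := by
        push_cast
        gcongr
        exact Int.floor_le r

end Lattice

section ChainSum

variable {G : Type*} [AddGroup G] {f : G → ℝ}

lemma sum_apply_sub_le_tsum (hf : 0 ≤ f) (hs : Summable f) (S : Finset G) (y : G) :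
    ∑ x : S, f (y - x) ≤ ∑' u, f u := by
  rw [← tsum_fintype (L := .unconditional _) (fun x : S => f (y - x))]
  exact tsum_comp_le_tsum_of_inj (i := fun x : S => y - x) hs hf
    (sub_right_injective.comp Subtype.val_injective)

lemma sum_prod_apply_succ_sub_castSucc_le (hf : 0 ≤ f) (hs : Summable f) (S : Finset G)
    (q : ℕ) :
    ∑ v : Fin (q + 1) → S, ∏ j : Fin q, f (v j.succ - v j.castSucc) ≤ #S * (∑' u, f u) ^ q := by
  induction q with
  | zero => simp
  | succ q ih =>
    rw [← (Fin.consEquiv fun _ => S).sum_comp, Fintype.sum_prod_type, sum_comm]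
    calc _ = ∑ w : Fin (q + 1) → S, (∏ j : Fin q, f (w j.succ - w j.castSucc)) *
            ∑ x : S, f (w 0 - x) := by
          refine sum_congr rfl fun w _ => ?_
          rw [mul_sum]
          refine sum_congr rfl fun x _ => ?_
          simp [Fin.prod_univ_succ, Fin.consEquiv, mul_comm]
      _ ≤ ∑ w : Fin (q + 1) → S, (∏ j : Fin q, f (w j.succ - w j.castSucc)) * ∑' u, f u := by
          gcongr with w
          · exact prod_nonneg fun j _ => hf _
          · exact sum_apply_sub_le_tsum hf hs S _
      _ ≤ #S * (∑' u, f u) ^ (q + 1) := by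
          rw [← sum_mul, pow_succ, ← mul_assoc]
          exact mul_le_mul_of_nonneg_right ih (tsum_nonneg hf)

end ChainSum

lemma rpow_neg_le_mul_rpow_neg {a R s t : ℝ} (ha : 0 < a) (haR : a ≤ R) (ht : 0 ≤ t) :
    a ^ (-s) ≤ R ^ t * a ^ (-(s + t)) := by
  rw [show -s = t + -(s + t) by ring, Real.rpow_add ha]
  gcongr

lemma prod_rpow_neg_le {q : ℕ} {a : Fin (q + 1) → ℝ} {R s t : ℝ} (ha : ∀ i, 1 ≤ a i)
    (haR : ∀ i, a i ≤ R) (hs : 0 ≤ s) (ht : 0 ≤ t) :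
    ∏ i, a i ^ (-s) ≤ R ^ (q * t) * ∏ j : Fin q, a j.castSucc ^ (-(s + t)) := by
  have ha0 : ∀ i, 0 < a i := fun i => one_pos.trans_le (ha i)
  have hR : 0 ≤ R := (ha0 0).le.trans (haR 0)
  calc ∏ i, a i ^ (-s) = (∏ j : Fin q, a j.castSucc ^ (-s)) * a (Fin.last q) ^ (-s) :=
        Fin.prod_univ_castSucc _
    _ ≤ (∏ j : Fin q, a j.castSucc ^ (-s)) * 1 := by
        gcongr
        · exact prod_nonneg fun j _ => Real.rpow_nonneg (ha0 _).le _
        · exact Real.rpow_le_one_of_one_le_of_nonpos (ha _) (by linarith)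
    _ ≤ ∏ j : Fin q, R ^ t * a j.castSucc ^ (-(s + t)) := by
        rw [mul_one]
        exact prod_le_prod (fun j _ => Real.rpow_nonneg (ha0 _).le _)
          fun j _ => rpow_neg_le_mul_rpow_neg (ha0 _) (haR _) ht
    _ = R ^ (q * t) * ∏ j : Fin q, a j.castSucc ^ (-(s + t)) := by
        rw [prod_mul_distrib, prod_const, card_univ, Fintype.card_fin, mul_comm (q : ℝ),
          Real.rpow_mul_natCast hR]

lemma finRotate_castSucc {q : ℕ} (j : Fin q) : finRotate (q + 1) j.castSucc = j.succ := by
  rw [finRotate_apply, Fin.coeSucc_eq_succ]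

lemma finRotate_ne_self {q : ℕ} (hq : 1 ≤ q) (i : Fin (q + 1)) : finRotate (q + 1) i ≠ i := by
  rw [finRotate_apply]
  simp only [ne_eq, add_eq_left, Fin.one_eq_zero_iff]
  omega

section CyclicGap

variable {d : ℕ}

noncomputable def cyclicGap {n : ℕ} (v : Fin n → Fin d → ℤ) (i : Fin n) : ℝ :=
  ‖euclideanOfInt (v i - v (finRotate n i))‖

lemma one_le_cyclicGap {q : ℕ} (hq : 1 ≤ q) {v : Fin (q + 1) → Fin d → ℤ}
    (hv : Function.Injective v) (i : Fin (q + 1)) : 1 ≤ cyclicGap v i :=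
  one_le_norm_euclideanOfInt (sub_ne_zero.mpr fun h => finRotate_ne_self hq i (hv h).symm)

lemma cyclicGap_castSucc {q : ℕ} (v : Fin (q + 1) → Fin d → ℤ) (j : Fin q) :
    cyclicGap v j.castSucc = ‖euclideanOfInt (v j.succ - v j.castSucc)‖ := by
  rw [cyclicGap, finRotate_castSucc, euclideanOfInt_sub, norm_sub_rev, ← euclideanOfInt_sub]

lemma cyclicGap_one_eq_cyclicGap_zero (v : Fin 2 → Fin d → ℤ) :
    cyclicGap v 1 = cyclicGap v 0 := by
  simp only [cyclicGap, euclideanOfInt_sub]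
  rw [norm_sub_rev]
  rfl

lemma exists_prod_cyclicGap_le {q : ℕ} (hd : 1 ≤ d) (hq : 1 ≤ q) :
    ∃ e : ℝ, d < e ∧ ∀ (R : ℝ) (v : Fin (q + 1) → Fin d → ℤ), Function.Injective v →
      (∀ i, cyclicGap v i ≤ R) →
      ∏ i, cyclicGap v i ^ (-(d : ℝ)) ≤
        R ^ (((q : ℝ) - 1) / 2) * ∏ j : Fin q, cyclicGap v j.castSucc ^ (-e) := by
  rcases hq.eq_or_lt with rfl | hq2
  · have hd' : (1 : ℝ) ≤ d := by exact_mod_cast hd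
    refine ⟨2 * d, by linarith, fun R v hv _ => ?_⟩
    have h0 : 0 < cyclicGap v 0 := one_pos.trans_le (one_le_cyclicGap le_rfl hv 0)
    rw [Fin.prod_univ_two, cyclicGap_one_eq_cyclicGap_zero, ← Real.rpow_add h0,
      Fin.prod_univ_one, Fin.castSucc_zero, Nat.cast_one, sub_self, zero_div, Real.rpow_zero,
      one_mul]
    exact le_of_eq (by ring_nf)
  · set t : ℝ := ((q : ℝ) - 1) / (2 * q)
    have ht : 0 < t := by
      have : (1 : ℝ) < q := by exact_mod_cast hq2
      positivity
    refine ⟨d + t, by linarith, fun R v hv hR => ?_⟩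
    have hqt : ((q : ℝ) - 1) / 2 = q * t := by
      have : (q : ℝ) ≠ 0 := by positivity
      simp only [t]
      field_simp
    rw [hqt]
    exact prod_rpow_neg_le (one_le_cyclicGap hq hv) hR (Nat.cast_nonneg d) ht.le

lemma exists_sum_prod_cyclicGap_le {q : ℕ} (hd : 1 ≤ d) (hq : 1 ≤ q) :
    ∃ K : ℝ, 0 ≤ K ∧ ∀ (S : Finset (Fin d → ℤ)) (R : ℝ), 0 ≤ R →
      (∀ v ∈ S, ∀ w ∈ S, ‖euclideanOfInt (v - w)‖ ≤ R) →
      ∑ v ∈ (univ : Finset (Fin (q + 1) → S)).filter (fun v => Function.Injective v),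
        ∏ i, cyclicGap (fun i => (v i : Fin d → ℤ)) i ^ (-(d : ℝ)) ≤
          K * #S * R ^ (((q : ℝ) - 1) / 2) := by
  obtain ⟨e, he, hprod⟩ := exists_prod_cyclicGap_le hd hq
  set f : (Fin d → ℤ) → ℝ := fun u => ‖euclideanOfInt u‖ ^ (-e)
  have hf : 0 ≤ f := fun u => Real.rpow_nonneg (norm_nonneg _) _
  refine ⟨(∑' u, f u) ^ q, pow_nonneg (tsum_nonneg hf) _, fun S R hR hS => ?_⟩
  set β : ℝ := ((q : ℝ) - 1) / 2
  calc _ ≤ ∑ v ∈ (univ : Finset (Fin (q + 1) → S)).filter (fun v => Function.Injective v),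
          R ^ β * ∏ j : Fin q, f (v j.succ - v j.castSucc) := by
        refine sum_le_sum fun v hv => ?_
        have hbound := hprod R (fun i => (v i : Fin d → ℤ))
          (Subtype.val_injective.comp (mem_filter.mp hv).2) fun i => hS _ (v i).2 _ (v _).2
        simpa only [cyclicGap_castSucc] using hbound
    _ ≤ ∑ v : Fin (q + 1) → S, R ^ β * ∏ j : Fin q, f (v j.succ - v j.castSucc) :=
        sum_le_sum_of_subset_of_nonneg (filter_subset _ _) fun v _ _ =>
          mul_nonneg (Real.rpow_nonneg hR _) (prod_nonneg fun j _ => hf _)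
    _ ≤ R ^ β * (#S * (∑' u, f u) ^ q) := by
        rw [← mul_sum]
        gcongr
        exact sum_prod_apply_succ_sub_castSucc_le hf (summable_norm_euclideanOfInt_rpow he) S q
    _ = (∑' u, f u) ^ q * #S * R ^ β := by ring

end CyclicGap

/-- Let `d ≥ 2`, `p ≥ 2`, `D` a bounded subset of `R^d` and
`D_ε = D/ε ∩ Z^d`. Then the sum over pairwise distinct `v₁,...,v_p ∈ D_ε` of the cyclic
product `∏_{i} |v_i - v_{i+1}|^{-d}` (indices mod `p`, Euclidean norm) is
`O(ε^{-p/2 - d + 1})` as `ε → 0`, with implied constant depending only on `D`, `d`, `p`.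
(The set of lattice points is encoded by an arbitrary finite `S` contained in `D/ε`.) -/
theorem gradient_squared_stmt10 (d p : ℕ) (hd : 2 ≤ d) (hp : 2 ≤ p)
    (D : Set (Fin d → ℝ)) (hD : Bornology.IsBounded D) :
    ∃ C : ℝ, 0 < C ∧ ∀ ε : ℝ, 0 < ε → ε ≤ 1 →
      ∀ S : Finset (Fin d → ℤ), (∀ v ∈ S, (fun i => ε * (v i : ℝ)) ∈ D) →
        ∑ v ∈ (Finset.univ : Finset (Fin p → {x // x ∈ S})).filter
            (fun v => Function.Injective v),
          ∏ i : Fin p,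
            (Real.sqrt (∑ m, (((v i : Fin d → ℤ) m : ℝ)
                - ((v (finRotate p i) : Fin d → ℤ) m : ℝ)) ^ 2)) ^ (-(d : ℤ))
        ≤ C * ε ^ (-(p : ℝ) / 2 - d + 1) := by
  obtain ⟨q, rfl⟩ : ∃ q, p = q + 1 := ⟨p - 1, by omega⟩
  obtain ⟨K, hK0, hK⟩ := exists_sum_prod_cyclicGap_le (d := d) (q := q) (by omega) (by omega)
  obtain ⟨M₀, hM₀⟩ := isBounded_iff_forall_norm_le.mp hD
  set M := max M₀ 1
  set β : ℝ := ((q : ℝ) - 1) / 2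
  refine ⟨max (K * (3 * M) ^ d * (2 * √d * M) ^ β) 1, lt_max_of_lt_right one_pos, ?_⟩
  intro ε hε hε1 S hS
  have hM : 1 ≤ M / ε := (one_le_div hε).mpr (hε1.trans (le_max_right _ _))
  have hcoord : ∀ v ∈ S, ∀ m, |(v m : ℝ)| ≤ M / ε := fun v hv =>
    abs_le_div_of_norm_mul_le hε ((hM₀ _ (hS v hv)).trans (le_max_left _ _))
  have hcard : (#S : ℝ) ≤ (3 * M / ε) ^ d := by
    refine (card_le_of_forall_abs_le (by linarith) S hcoord).trans ?_
    gcongr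
    linarith [mul_div_assoc 3 M ε]
  have hdiam : ∀ v ∈ S, ∀ w ∈ S, ‖euclideanOfInt (v - w)‖ ≤ 2 * √d * M / ε := fun v hv w hw =>
    (norm_euclideanOfInt_sub_le (by positivity) (hcoord v hv) (hcoord w hw)).trans_eq (by ring)
  calc _ = ∑ v ∈ (univ : Finset (Fin (q + 1) → S)).filter (fun v => Function.Injective v),
          ∏ i, cyclicGap (fun i => (v i : Fin d → ℤ)) i ^ (-(d : ℝ)) := by
        refine sum_congr rfl fun v _ => prod_congr rfl fun i _ => ?_
        rw [cyclicGap, norm_euclideanOfInt_sub, ← Real.rpow_intCast]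
        push_cast
        rfl
    _ ≤ K * #S * (2 * √d * M / ε) ^ β := hK S _ (by positivity) hdiam
    _ ≤ K * (3 * M / ε) ^ d * (2 * √d * M / ε) ^ β := by gcongr
    _ = K * (3 * M) ^ d * (2 * √d * M) ^ β * ε ^ (-((q + 1 : ℕ) : ℝ) / 2 - d + 1) := by
        rw [div_pow, Real.div_rpow (by positivity) hε.le,
          show -((q + 1 : ℕ) : ℝ) / 2 - d + 1 = -((d : ℕ) : ℝ) + -β by push_cast; ring,
          Real.rpow_add hε, Real.rpow_neg hε.le, Real.rpow_neg hε.le, Real.rpow_natCast]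
        ring
    _ ≤ _ := by gcongr; exact le_max_left _ _
end

section
/- Let d ≥ 2 and suppose a centered random field Φ on D_ε = D/ε ∩ Z^d satisfies the joint-cumulant bound |κ(Φ(v) : v ∈ V)| ≤ C_n ∑_{σ ∈ S⁰_cycl(V)} ∏_{v ∈ V} min(|v - σ(v)|^{-d}, 1) for every finite multiset V of n points. Then for every n ≥ 3, ε^{nd/2} ∑_{v₁,...,v_n ∈ D_ε} |κ(Φ(v_i) : i ∈ [n])| = O(ε^{(d-1)(n-2)/2}), which tends to 0 as ε → 0. -/
/-! The Euclidean weight `min(|v - w|^{-d}, 1)` is dominated by the product over coordinates of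
`min(|v_m - w_m|^{-1}, 1)`, whose row sums over a cube of side `O(1/ε)` are `O(log(1/ε)^d)`.
Conjugating a full cycle to the rotation of `Fin n` and dropping its closing edge turns each
cyclic sum into a chain sum, bounded by `|D_ε| · (row sum)^{n-1} = O(ε^{-d} log(1/ε)^{d(n-1)})`.
Since `nd/2 - d = (d-1)(n-2)/2 + (n-2)/2` and `n ≥ 3`, the spare factor `ε^{(n-2)/2}` absorbs
the logarithms. -/

open Finset Real
open scoped Classical Nat

namespace GradientSquared

section CycleSums

variable {T : Type*} [Fintype T] {G : T → T → ℝ} {A : ℝ}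

theorem sum_prod_chain_le (hG : ∀ v w, 0 ≤ G v w) (hA : ∀ w, ∑ v, G v w ≤ A) (hA0 : 0 ≤ A)
    (m : ℕ) :
    ∑ W : Fin (m + 1) → T, ∏ j : Fin m, G (W j.castSucc) (W j.succ)
      ≤ Fintype.card T * A ^ m := by
  induction m with
  | zero => simp
  | succ m ih =>
    set P : (Fin (m + 1) → T) → ℝ := fun W => ∏ j : Fin m, G (W j.castSucc) (W j.succ)
    have hsplit : ∑ W : Fin (m + 2) → T, ∏ j : Fin (m + 1), G (W j.castSucc) (W j.succ)
        = ∑ W : Fin (m + 1) → T, (∑ t, G t (W 0)) * P W := by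
      rw [← Fintype.sum_equiv (Fin.consEquiv fun _ => T) (fun p => G p.1 (p.2 0) * P p.2) _
        fun p => by simp [P, Fin.prod_univ_succ], Fintype.sum_prod_type_right]
      simp only [Finset.sum_mul]
    calc _ = ∑ W : Fin (m + 1) → T, (∑ t, G t (W 0)) * P W := hsplit
      _ ≤ ∑ W : Fin (m + 1) → T, A * P W := by
        gcongr with W
        · exact prod_nonneg fun j _ => hG _ _
        · exact hA _
      _ ≤ A * (Fintype.card T * A ^ m) := by rw [← mul_sum]; gcongr
      _ = Fintype.card T * A ^ (m + 1) := by ring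

theorem finRotate_castSucc (m : ℕ) (j : Fin m) : finRotate (m + 1) j.castSucc = j.succ :=
  Fin.ext (by rw [coe_finRotate_of_ne_last (Fin.castSucc_lt_last j).ne]; simp)

theorem sum_prod_finRotate_le (hG : ∀ v w, 0 ≤ G v w) (hG1 : ∀ v w, G v w ≤ 1)
    (hA : ∀ w, ∑ v, G v w ≤ A) (hA0 : 0 ≤ A) (m : ℕ) :
    ∑ W : Fin (m + 1) → T, ∏ j, G (W j) (W (finRotate (m + 1) j))
      ≤ Fintype.card T * A ^ m := by
  refine le_trans (sum_le_sum fun W _ => ?_) (sum_prod_chain_le hG hA hA0 m)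
  rw [Fin.prod_univ_castSucc]
  simp only [finRotate_castSucc]
  exact mul_le_of_le_one_right (prod_nonneg fun j _ => hG _ _) (hG1 _ _)

theorem sum_prod_cycle_le (hG : ∀ v w, 0 ≤ G v w) (hG1 : ∀ v w, G v w ≤ 1)
    (hA : ∀ w, ∑ v, G v w ≤ A) (hA0 : 0 ≤ A) {n : ℕ} {σ : Equiv.Perm (Fin n)}
    (hσ : σ.IsCycle) (hfix : ∀ i, σ i ≠ i) :
    ∑ V : Fin n → T, ∏ i, G (V i) (V (σ i)) ≤ Fintype.card T * A ^ (n - 1) := by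
  obtain ⟨m, rfl⟩ : ∃ m, n = m + 2 := by
    have := hσ.two_le_card_support.trans (card_le_univ σ.support)
    exact ⟨n - 2, by rw [Fintype.card_fin] at this; omega⟩
  have hconj : IsConj (finRotate (m + 2)) σ := isCycle_finRotate.isConj hσ <| by
    rw [support_finRotate, Finset.eq_univ_of_forall fun i => Equiv.Perm.mem_support.2 (hfix i)]
  obtain ⟨c, rfl⟩ := isConj_iff.1 hconj
  calc ∑ V : Fin (m + 2) → T, ∏ i, G (V i) (V ((c * finRotate (m + 2) * c⁻¹) i))
      = ∑ W : Fin (m + 2) → T, ∏ j, G (W j) (W (finRotate (m + 2) j)) := by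
        refine Fintype.sum_equiv (c.symm.arrowCongr (Equiv.refl T)) _ _ fun V => ?_
        refine (Fintype.prod_equiv c _ _ fun j => ?_).symm
        simp
    _ ≤ Fintype.card T * A ^ (m + 2 - 1) := sum_prod_finRotate_le hG hG1 hA hA0 (m + 1)

end CycleSums

noncomputable def fullCycles (n : ℕ) : Finset (Equiv.Perm (Fin n)) :=
  univ.filter fun σ => σ.IsCycle ∧ ∀ i, σ i ≠ i

theorem card_fullCycles_le (n : ℕ) : #(fullCycles n) ≤ n ! :=
  (card_filter_le _ _).trans (by simp [Fintype.card_perm])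

theorem sum_abs_le_of_abs_le_sum_fullCycles {T : Type*} [Fintype T] {G : T → T → ℝ} {A : ℝ}
    (hG : ∀ v w, 0 ≤ G v w) (hG1 : ∀ v w, G v w ≤ 1) (hA : ∀ w, ∑ v, G v w ≤ A) (hA0 : 0 ≤ A)
    {n : ℕ} {C : ℝ} (hC : 0 ≤ C) {F : (Fin n → T) → ℝ}
    (hF : ∀ V, |F V| ≤ C * ∑ σ ∈ fullCycles n, ∏ i, G (V i) (V (σ i))) :
    ∑ V, |F V| ≤ C * n ! * (Fintype.card T * A ^ (n - 1)) := calc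
  ∑ V, |F V| ≤ ∑ V, C * ∑ σ ∈ fullCycles n, ∏ i, G (V i) (V (σ i)) := sum_le_sum fun V _ => hF V
  _ = C * ∑ σ ∈ fullCycles n, ∑ V : Fin n → T, ∏ i, G (V i) (V (σ i)) := by
    rw [← mul_sum, sum_comm]
  _ ≤ C * ∑ σ ∈ fullCycles n, Fintype.card T * A ^ (n - 1) := by
    gcongr with σ hσ
    obtain ⟨hcycle, hfix⟩ := (mem_filter.1 hσ).2
    exact sum_prod_cycle_le hG hG1 hA hA0 hcycle hfix
  _ ≤ C * n ! * (Fintype.card T * A ^ (n - 1)) := by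
    rw [sum_const, nsmul_eq_mul, mul_assoc]
    gcongr
    exact_mod_cast card_fullCycles_le n

noncomputable def coordWeight (t : ℤ) : ℝ := (max |(t : ℝ)| 1)⁻¹

theorem coordWeight_nonneg (t : ℤ) : 0 ≤ coordWeight t := by unfold coordWeight; positivity

theorem coordWeight_le_one (t : ℤ) : coordWeight t ≤ 1 :=
  inv_le_one_of_one_le₀ (le_max_right _ _)

theorem coordWeight_neg (t : ℤ) : coordWeight (-t) = coordWeight t := by simp [coordWeight]

theorem coordWeight_natCast_add_one (k : ℕ) : coordWeight (k + 1) = ((k : ℝ) + 1)⁻¹ := by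
  rw [coordWeight, max_eq_left] <;> push_cast <;> rw [abs_of_nonneg (by positivity)]; linarith

theorem sum_Icc_coordWeight (L : ℕ) :
    ∑ t ∈ Icc (-(L : ℤ)) L, coordWeight t = 1 + 2 * (harmonic L : ℝ) := by
  induction L with
  | zero => simp [coordWeight]
  | succ L ih =>
    have hIcc : Icc (-((L + 1 : ℕ) : ℤ)) ((L + 1 : ℕ) : ℤ)
        = insert (-((L : ℤ) + 1)) (insert ((L : ℤ) + 1) (Icc (-(L : ℤ)) L)) := by
      ext x; simp only [mem_Icc, mem_insert]; omega
    rw [hIcc, sum_insert (by simp only [mem_insert, mem_Icc]; omega),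
      sum_insert (by simp only [mem_Icc]; omega), ih, coordWeight_neg,
      coordWeight_natCast_add_one, harmonic_succ]
    push_cast
    ring

theorem one_add_two_mul_harmonic_nonneg (L : ℕ) : 0 ≤ 1 + 2 * (harmonic L : ℝ) :=
  sum_Icc_coordWeight L ▸ sum_nonneg fun t _ => coordWeight_nonneg t

noncomputable def cube (d L : ℕ) : Finset (Fin d → ℤ) := Fintype.piFinset fun _ => Icc (-(L : ℤ)) L

theorem mem_cube {d L : ℕ} {x : Fin d → ℤ} : x ∈ cube d L ↔ ∀ m, |x m| ≤ L := by
  simp [cube, abs_le]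

theorem card_cube (d L : ℕ) : #(cube d L) = (2 * L + 1) ^ d := by
  simp only [cube, Fintype.card_piFinset, Int.card_Icc, prod_const, card_univ, Fintype.card_fin]
  congr 1
  omega

theorem sum_cube_prod (d L : ℕ) (f : ℤ → ℝ) :
    ∑ x ∈ cube d L, ∏ m, f (x m) = (∑ t ∈ Icc (-(L : ℤ)) L, f t) ^ d := by
  rw [cube, ← prod_univ_sum, prod_const, card_univ, Fintype.card_fin]

noncomputable def latticeKernel {d : ℕ} (v w : Fin d → ℤ) : ℝ := ∏ m, coordWeight (v m - w m)

theorem latticeKernel_nonneg {d : ℕ} (v w : Fin d → ℤ) : 0 ≤ latticeKernel v w :=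
  prod_nonneg fun _ _ => coordWeight_nonneg _

theorem latticeKernel_le_one {d : ℕ} (v w : Fin d → ℤ) : latticeKernel v w ≤ 1 :=
  prod_le_one (fun _ _ => coordWeight_nonneg _) fun _ _ => coordWeight_le_one _

theorem latticeKernel_comm {d : ℕ} (v w : Fin d → ℤ) : latticeKernel v w = latticeKernel w v := by
  simp only [latticeKernel, ← coordWeight_neg (v _ - w _), neg_sub]

theorem sum_latticeKernel_le {d L : ℕ} {S : Finset (Fin d → ℤ)} {v : Fin d → ℤ}
    (hS : ∀ w ∈ S, ∀ m, |v m - w m| ≤ L) :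
    ∑ w ∈ S, latticeKernel v w ≤ (1 + 2 * (harmonic L : ℝ)) ^ d := calc
  ∑ w ∈ S, latticeKernel v w = ∑ x ∈ S.image (v - ·), ∏ m, coordWeight (x m) := by
    rw [sum_image fun _ _ _ _ h => sub_right_injective h]
    rfl
  _ ≤ ∑ x ∈ cube d L, ∏ m, coordWeight (x m) := by
    refine sum_le_sum_of_subset_of_nonneg (fun x hx => ?_) fun _ _ _ =>
      prod_nonneg fun _ _ => coordWeight_nonneg _
    obtain ⟨w, hw, rfl⟩ := mem_image.1 hx
    exact mem_cube.2 (hS w hw)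
  _ = (1 + 2 * (harmonic L : ℝ)) ^ d := by rw [sum_cube_prod, sum_Icc_coordWeight]

noncomputable def cycleWeight {d : ℕ} (v w : Fin d → ℤ) : ℝ :=
  if v = w then 1 else (Real.sqrt (∑ m, ((v m : ℝ) - (w m : ℝ)) ^ 2)) ^ (-(d : ℤ))

theorem cycleWeight_nonneg {d : ℕ} (v w : Fin d → ℤ) : 0 ≤ cycleWeight v w := by
  unfold cycleWeight; split_ifs <;> positivity

theorem cycleWeight_le_latticeKernel {d : ℕ} (v w : Fin d → ℤ) :
    cycleWeight v w ≤ latticeKernel v w := by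
  unfold cycleWeight
  split_ifs with hvw
  · simp [hvw, latticeKernel, coordWeight]
  set s := Real.sqrt (∑ m, ((v m : ℝ) - (w m : ℝ)) ^ 2)
  have hcoord : ∀ m, |(v m : ℝ) - w m| ≤ s := fun m =>
    Real.abs_le_sqrt (single_le_sum (f := fun m => ((v m : ℝ) - w m) ^ 2)
      (fun _ _ => sq_nonneg _) (mem_univ m))
  have hs1 : 1 ≤ s := by
    obtain ⟨m, hm⟩ := Function.ne_iff.1 hvw
    have : (1 : ℝ) ≤ |(v m : ℝ) - w m| := by exact_mod_cast Int.one_le_abs (sub_ne_zero.2 hm)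
    exact this.trans (hcoord m)
  rw [zpow_neg, zpow_natCast, ← inv_pow]
  calc (s⁻¹) ^ d = ∏ _m : Fin d, s⁻¹ := by simp
  _ ≤ latticeKernel v w := prod_le_prod (fun _ _ => by positivity) fun m _ =>
    inv_anti₀ (by positivity) (max_le (by exact_mod_cast hcoord m) hs1)

theorem sum_abs_le_of_abs_le_sum_cycleWeight {d n N : ℕ} {S : Finset (Fin d → ℤ)}
    (hS : S ⊆ cube d N) {C : ℝ} (hC : 0 ≤ C) {F : (Fin n → Fin d → ℤ) → ℝ}
    (hF : ∀ V, |F V| ≤ C * ∑ σ ∈ fullCycles n, ∏ i, cycleWeight (V i) (V (σ i))) :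
    ∑ V : Fin n → S, |F fun i => V i|
      ≤ C * n ! * ((2 * N + 1) ^ d * ((1 + 2 * (harmonic (2 * N) : ℝ)) ^ d) ^ (n - 1)) := by
  have hrow : ∀ w : S, ∑ v : S, latticeKernel (v : Fin d → ℤ) w
      ≤ (1 + 2 * (harmonic (2 * N) : ℝ)) ^ d := by
    intro w
    simp only [latticeKernel_comm _ (w : Fin d → ℤ)]
    rw [sum_coe_sort S (latticeKernel (w : Fin d → ℤ))]
    refine sum_latticeKernel_le fun v hv m => ?_
    have hw := mem_cube.1 (hS w.2) m
    have hv := mem_cube.1 (hS hv) m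
    push_cast
    linarith [abs_sub (w.1 m) (v m)]
  have hcard : (Fintype.card S : ℝ) ≤ (2 * N + 1) ^ d := by
    rw [Fintype.card_coe]
    exact_mod_cast (card_le_card hS).trans (card_cube d N).le
  refine (sum_abs_le_of_abs_le_sum_fullCycles (fun _ _ => latticeKernel_nonneg _ _)
    (fun _ _ => latticeKernel_le_one _ _) hrow (pow_nonneg (one_add_two_mul_harmonic_nonneg _) d) hC fun V => ?_).trans ?_
  · refine (hF _).trans ?_
    gcongr
    · exact fun _ _ => cycleWeight_nonneg _ _
    · exact cycleWeight_le_latticeKernel _ _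
  · have := one_add_two_mul_harmonic_nonneg (2 * N)
    gcongr

theorem subset_cube_of_norm_le {d : ℕ} {S : Finset (Fin d → ℤ)} {ε R : ℝ} (hε : 0 < ε)
    (hS : ∀ v ∈ S, ‖fun i => ε * (v i : ℝ)‖ ≤ R) : S ⊆ cube d ⌈R / ε⌉₊ := by
  intro v hv
  refine mem_cube.2 fun m => ?_
  have hm : ε * |(v m : ℝ)| ≤ R := by
    simpa [abs_mul, abs_of_pos hε] using (norm_le_pi_norm _ m).trans (hS v hv)
  have : |(v m : ℝ)| ≤ ⌈R / ε⌉₊ := ((le_div_iff₀' hε).2 hm).trans (Nat.le_ceil _)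
  exact_mod_cast this

theorem mul_ceil_div_le_add_one {ε R : ℝ} (hε : 0 < ε) (hε1 : ε ≤ 1) (hR : 0 ≤ R) :
    ε * ⌈R / ε⌉₊ ≤ R + 1 := calc
  ε * ⌈R / ε⌉₊ ≤ ε * (R / ε + 1) := by gcongr; exact (Nat.ceil_lt_add_one (by positivity)).le
  _ = R + ε := by field_simp
  _ ≤ R + 1 := by linarith

theorem one_add_two_mul_harmonic_le {ε R : ℝ} (hε : 0 < ε) (hε1 : ε ≤ 1) (hR : 0 < R) :
    1 + 2 * (harmonic (2 * ⌈R / ε⌉₊) : ℝ) ≤ (3 + 2 * log (2 * R + 2)) * (1 - log ε) := by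
  have hN : (0 : ℝ) < 2 * ⌈R / ε⌉₊ := by
    have : 0 < ⌈R / ε⌉₊ := Nat.ceil_pos.2 (by positivity)
    positivity
  have hNle : (2 * ⌈R / ε⌉₊ : ℝ) ≤ (2 * R + 2) / ε := by
    rw [le_div_iff₀ hε]
    linarith [mul_ceil_div_le_add_one hε hε1 hR.le]
  have hlog : log (2 * ⌈R / ε⌉₊ : ℝ) ≤ log (2 * R + 2) - log ε := by
    rw [← log_div (by positivity) hε.ne']
    exact log_le_log hN hNle
  have hH := harmonic_le_one_add_log (2 * ⌈R / ε⌉₊)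
  push_cast at hH
  have hlogε : 0 ≤ -log ε := neg_nonneg.2 (log_nonpos hε.le hε1)
  have hlogR : 0 ≤ log (2 * R + 2) := log_nonneg (by linarith)
  nlinarith [mul_nonneg (by linarith : 0 ≤ 1 + 2 * log (2 * R + 2)) hlogε]

theorem rpow_mul_one_sub_log_pow_le {ε β : ℝ} (hε : 0 < ε) (hε1 : ε ≤ 1) (hβ : 0 < β) (M : ℕ) :
    ε ^ β * (1 - log ε) ^ M ≤ (M / β + 1) ^ M := by
  set y := -log ε
  have hy : 0 ≤ y := neg_nonneg.2 (log_nonpos hε.le hε1)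
  set k : ℝ := M / β + 1
  have hk : 1 ≤ k := le_add_of_nonneg_left (by positivity)
  have hlin : 1 + y ≤ k * exp (y / k) := calc
    1 + y ≤ k * (y / k + 1) := by field_simp; linarith
    _ ≤ k * exp (y / k) := by gcongr; exact add_one_le_exp _
  have hexp : M * (y / k) ≤ β * y := by
    have hMk : (M : ℝ) / k ≤ β := by
      rw [div_le_iff₀ (by positivity)]
      simp only [k]
      rw [mul_add, mul_div_cancel₀ _ hβ.ne']
      linarith
    calc (M : ℝ) * (y / k) = M / k * y := by ring
      _ ≤ β * y := by gcongr
  calc ε ^ β * (1 - log ε) ^ M = ε ^ β * (1 + y) ^ M := by ring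
    _ ≤ ε ^ β * (k * exp (y / k)) ^ M := by gcongr
    _ = k ^ M * (exp (-(β * y)) * exp (M * (y / k))) := by
      rw [rpow_def_of_pos hε, show log ε * β = -(β * y) by simp only [y]; ring, mul_pow,
        ← exp_nat_mul]
      ring
    _ ≤ k ^ M * (exp (-(β * y)) * exp (β * y)) := by gcongr
    _ = k ^ M := by rw [← exp_add]; simp

theorem exists_rpow_mul_cube_bound_le (d : ℕ) {n : ℕ} (hn : 3 ≤ n) {R : ℝ} (hR : 0 < R) :
    ∃ K : ℝ, 0 ≤ K ∧ ∀ ε : ℝ, 0 < ε → ε ≤ 1 →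
      ε ^ ((n * d : ℝ) / 2) * ((2 * ⌈R / ε⌉₊ + 1) ^ d
          * ((1 + 2 * (harmonic (2 * ⌈R / ε⌉₊) : ℝ)) ^ d) ^ (n - 1))
        ≤ K * ε ^ (((d : ℝ) - 1) * ((n : ℝ) - 2) / 2) := by
  set M := d * (n - 1)
  set β : ℝ := ((n : ℝ) - 2) / 2
  have hβ : 0 < β := by
    have : (3 : ℝ) ≤ n := by exact_mod_cast hn
    simp only [β]; linarith
  set a := 3 + 2 * log (2 * R + 2)
  have ha : 0 ≤ a := by have := log_nonneg (by linarith : (1 : ℝ) ≤ 2 * R + 2); positivity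
  refine ⟨(2 * R + 3) ^ d * (a ^ M * (M / β + 1) ^ M), by positivity, fun ε hε hε1 => ?_⟩
  set N := ⌈R / ε⌉₊
  set q := ((d : ℝ) - 1) * ((n : ℝ) - 2) / 2
  have hsplit : ε ^ ((n * d : ℝ) / 2) = ε ^ q * (ε ^ d * ε ^ β) := by
    rw [← rpow_natCast ε d, ← rpow_add hε, ← rpow_add hε]
    congr 1
    ring
  have hbox : ε * (2 * N + 1) ≤ 2 * R + 3 := by
    linarith [mul_ceil_div_le_add_one hε hε1 hR.le]
  have hH := one_add_two_mul_harmonic_le hε hε1 hR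
  have hH0 := one_add_two_mul_harmonic_nonneg (2 * N)
  calc ε ^ ((n * d : ℝ) / 2) * ((2 * N + 1) ^ d * ((1 + 2 * (harmonic (2 * N) : ℝ)) ^ d) ^ (n - 1))
      = ε ^ q * ((ε * (2 * N + 1)) ^ d * (ε ^ β * (1 + 2 * (harmonic (2 * N) : ℝ)) ^ M)) := by
        rw [hsplit, ← pow_mul, mul_pow]; ring
    _ ≤ ε ^ q * ((2 * R + 3) ^ d * (ε ^ β * (a * (1 - log ε)) ^ M)) := by gcongr
    _ = ε ^ q * ((2 * R + 3) ^ d * (a ^ M * (ε ^ β * (1 - log ε) ^ M))) := by rw [mul_pow]; ring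
    _ ≤ ε ^ q * ((2 * R + 3) ^ d * (a ^ M * (M / β + 1) ^ M)) := by
        gcongr; exact rpow_mul_one_sub_log_pow_le hε hε1 hβ M
    _ = _ := by ring

end GradientSquared

open GradientSquared

theorem gradient_squared_stmt11_general (d n : ℕ) (hn : 3 ≤ n)
    (D : Set (Fin d → ℝ)) (hD : Bornology.IsBounded D)
    (K : ℝ → (Fin n → (Fin d → ℤ)) → ℝ) (C : ℝ)
    (hK : ∀ ε : ℝ, 0 < ε → ∀ V : Fin n → (Fin d → ℤ),
      |K ε V| ≤ C * ∑ σ ∈ (Finset.univ : Finset (Equiv.Perm (Fin n))).filter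
          (fun σ => σ.IsCycle ∧ ∀ i, σ i ≠ i),
        ∏ i : Fin n,
          (if V i = V (σ i) then 1 else
            (Real.sqrt (∑ m, ((V i m : ℝ) - (V (σ i) m : ℝ)) ^ 2)) ^ (-(d : ℤ)))) :
    ∃ C' : ℝ, 0 < C' ∧ ∀ ε : ℝ, 0 < ε → ε ≤ 1 →
      ∀ S : Finset (Fin d → ℤ), (∀ v ∈ S, (fun i => ε * (v i : ℝ)) ∈ D) →
        ε ^ ((n * d : ℝ) / 2) *
            ∑ V : Fin n → {x // x ∈ S}, |K ε (fun i => (V i : Fin d → ℤ))|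
          ≤ C' * ε ^ (((d : ℝ) - 1) * ((n : ℝ) - 2) / 2) := by
  obtain ⟨R, hR, hRD⟩ := hD.exists_pos_norm_le
  obtain ⟨B, hB, hBε⟩ := exists_rpow_mul_cube_bound_le d hn hR
  refine ⟨max C 0 * n ! * B + 1, by positivity, fun ε hε hε1 S hS => ?_⟩
  have hsum := sum_abs_le_of_abs_le_sum_cycleWeight
    (subset_cube_of_norm_le hε fun v hv => hRD _ (hS v hv)) (le_max_right C 0) (F := K ε)
    fun V => (hK ε hε V).trans <| mul_le_mul_of_nonneg_right (le_max_left C 0) <|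
      sum_nonneg fun σ _ => prod_nonneg fun i _ => cycleWeight_nonneg _ _
  have hq := Real.rpow_nonneg hε.le (((d : ℝ) - 1) * ((n : ℝ) - 2) / 2)
  calc _ ≤ ε ^ ((n * d : ℝ) / 2) * (max C 0 * n ! * ((2 * ⌈R / ε⌉₊ + 1) ^ d
          * ((1 + 2 * (harmonic (2 * ⌈R / ε⌉₊) : ℝ)) ^ d) ^ (n - 1))) := by gcongr
    _ = max C 0 * n ! * (ε ^ ((n * d : ℝ) / 2) * ((2 * ⌈R / ε⌉₊ + 1) ^ d
          * ((1 + 2 * (harmonic (2 * ⌈R / ε⌉₊) : ℝ)) ^ d) ^ (n - 1))) := by ring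
    _ ≤ max C 0 * n ! * (B * ε ^ (((d : ℝ) - 1) * ((n : ℝ) - 2) / 2)) :=
        mul_le_mul_of_nonneg_left (hBε ε hε hε1) (by positivity)
    _ ≤ _ := by nlinarith

/-- Let `d ≥ 2` and suppose a (scale-dependent) joint cumulant functional `K`
of `n`-tuples of points of `D_ε = D/ε ∩ Z^d` satisfies the bound
`|κ(Φ(v) : v ∈ V)| ≤ C ∑_{σ ∈ S⁰_cycl(V)} ∏_v min(|v - σ(v)|^{-d}, 1)`, the sum being over
full cyclic permutations without fixed points. Then for every `n ≥ 3`,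
`ε^{nd/2} ∑_{v₁,...,v_n ∈ D_ε} |κ(Φ(v_i) : i ∈ [n])| = O(ε^{(d-1)(n-2)/2})`,
which tends to `0` as `ε → 0`. -/
theorem gradient_squared_stmt11 (d n : ℕ) (hd : 2 ≤ d) (hn : 3 ≤ n)
    (D : Set (Fin d → ℝ)) (hD : Bornology.IsBounded D)
    (K : ℝ → (Fin n → (Fin d → ℤ)) → ℝ) (C : ℝ)
    (hK : ∀ ε : ℝ, 0 < ε → ∀ V : Fin n → (Fin d → ℤ),
      |K ε V| ≤ C * ∑ σ ∈ (Finset.univ : Finset (Equiv.Perm (Fin n))).filter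
          (fun σ => σ.IsCycle ∧ ∀ i, σ i ≠ i),
        ∏ i : Fin n,
          (if V i = V (σ i) then 1 else
            (Real.sqrt (∑ m, ((V i m : ℝ) - (V (σ i) m : ℝ)) ^ 2)) ^ (-(d : ℤ)))) :
    ∃ C' : ℝ, 0 < C' ∧ ∀ ε : ℝ, 0 < ε → ε ≤ 1 →
      ∀ S : Finset (Fin d → ℤ), (∀ v ∈ S, (fun i => ε * (v i : ℝ)) ∈ D) →
        ε ^ ((n * d : ℝ) / 2) *
            ∑ V : Fin n → {x // x ∈ S}, |K ε (fun i => (V i : Fin d → ℤ))|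
          ≤ C' * ε ^ (((d : ℝ) - 1) * ((n : ℝ) - 2) / 2) :=
  gradient_squared_stmt11_general d n hn D hD K C hK
end

section
/- Let k ≥ 2 and let FD₀ be the set of perfect matchings of the multiset {1,1,2,2,...,k,k} (two distinguishable copies of each label) such that no edge matches two copies with the same label. Then the map sending a matching to the permutation structure it induces on {1,...,k} surjects onto the fixed-point-free permutations whose cycle type is recorded, and the number of matchings inducing a given cycle partition into blocks B₁,...,B_q is ∏_{i=1}^q 2^{|B_i|-1} · (number of full cyclic orders on B_i). -/
/-!
Let `T = copyFlip ∘ M` be the step "follow the matching, then switch to the other copy". For an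
involution `M`, `copyFlip` conjugates `T` to `T⁻¹`, and since `M` joins no two copies of the same
label, no cycle of `T` passes through both copies of a label. Hence the `T`-cycle through the first
copy of a chosen representative of a block meets each label `j` of the block in exactly one copy
`ε j`, and on these copies `T` acts as a permutation `σ` of the labels whose cycles are the blocks.
Conversely, joining copy `ε j` of `j` to the other copy of `σ j` recovers `M`. So the diagrams
inducing `π` correspond to the pairs `(σ, ε)` with `ε = false` on the representatives: `σ` is a
choice of one full cycle on each block, and `ε` contributes `2 ^ (|B| - 1)` choices per block.
-/

open scoped Classical

/-- The involution of `Fin k × Bool` swapping the two copies of each label. -/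
def copyFlip (k : ℕ) : Equiv.Perm (Fin k × Bool) :=
  Equiv.prodCongr (Equiv.refl (Fin k)) (Function.Involutive.toPerm not Bool.not_not)

/-- The complete Feynman diagrams on the doubled label set `{1,1,...,k,k}`: perfect matchings
(fixed-point-free involutions of `Fin k × Bool`) such that no edge joins two copies of the
same label. -/
noncomputable def feynmanDiagrams (k : ℕ) : Finset (Equiv.Perm (Fin k × Bool)) :=
  Finset.univ.filter fun M => (∀ x, M (M x) = x) ∧ ∀ x, (M x).1 ≠ x.1

/-- The matching `M` induces the partition `π` of the labels: the blocks of `π` are exactly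
the label-components of the union of closed cycles traced out by `M` (following the matching
and then switching to the other copy of the matched label). -/
def inducesPartition (k : ℕ) (M : Equiv.Perm (Fin k × Bool))
    (π : Finpartition (Finset.univ : Finset (Fin k))) : Prop :=
  ∀ j j' : Fin k, j' ∈ π.part j ↔
    ∃ m : ℕ, (((M.trans (copyFlip k)) ^ m) (j, false)).1 = j'

open Finset Equiv Equiv.Perm

lemma Finset.exists_isCycle_support_eq {α : Type*} [DecidableEq α] [Fintype α] {s : Finset α}
    (hs : 2 ≤ #s) : ∃ σ : Perm α, σ.IsCycle ∧ σ.support = s := by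
  have hlen : 2 ≤ s.toList.length := by rwa [length_toList]
  refine ⟨s.toList.formPerm, List.isCycle_formPerm s.nodup_toList hlen, ?_⟩
  rw [List.support_formPerm_of_nodup _ s.nodup_toList, toList_toFinset]
  rintro x hx
  simp [hx] at hlen

lemma card_filter_forall_mem_eq_false {α : Type*} [DecidableEq α] [Fintype α] (S : Finset α) :
    #{ε : α → Bool | ∀ x ∈ S, ε x = false} = 2 ^ (Fintype.card α - #S) := by
  rw [← card_compl, ← card_powerset]
  refine card_bij' (fun ε _ => univ.filter (ε · = true)) (fun t _ x => decide (x ∈ t)) ?_ ?_ ?_ ?_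
  · intro ε hε
    simp only [mem_filter, mem_univ, true_and] at hε
    simp only [mem_powerset, subset_iff, mem_filter, mem_univ, true_and, mem_compl]
    intro x hx hxS
    simp [hε x hxS] at hx
  · intro t ht
    simp only [mem_powerset, subset_iff, mem_compl] at ht
    simp only [mem_filter, mem_univ, true_and, decide_eq_false_iff_not]
    exact fun x hxS hxt => ht hxt hxS
  · intro ε _
    funext x
    simp
  · intro t _
    ext x
    simp

namespace Finpartition

variable {α : Type*} [DecidableEq α]

lemma sum_card_sub_one {s : Finset α} (P : Finpartition s) :
    ∑ B ∈ P.parts, (#B - 1) = #s - #P.parts := by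
  rw [sum_tsub_distrib _ fun B hB => (P.nonempty_of_mem_parts hB).card_pos, P.sum_card_parts,
    card_eq_sum_ones P.parts]

variable [Fintype α] (π : Finpartition (univ : Finset α))

lemma prod_two_pow_card_sub_one :
    ∏ B ∈ π.parts, 2 ^ (#B - 1) = 2 ^ (Fintype.card α - #π.parts) := by
  rw [prod_pow_eq_pow_sum, π.sum_card_sub_one, card_univ]

def blockOf (j : α) : π.parts := ⟨π.part j, π.part_mem.2 (mem_univ j)⟩

lemma mem_blockOf (j : α) : j ∈ (π.blockOf j : Finset α) := π.mem_part (mem_univ j)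

lemma blockOf_eq {j : α} {B : π.parts} (hj : j ∈ (B : Finset α)) : π.blockOf j = B :=
  Subtype.ext (π.part_eq_of_mem B.2 hj)

noncomputable def blockRep (B : π.parts) : α := (π.nonempty_of_mem_parts B.2).choose

lemma blockRep_mem (B : π.parts) : π.blockRep B ∈ (B : Finset α) :=
  (π.nonempty_of_mem_parts B.2).choose_spec

lemma blockRep_injective : Function.Injective π.blockRep := fun B B' h =>
  (π.blockOf_eq (π.blockRep_mem B)).symm.trans (h ▸ π.blockOf_eq (π.blockRep_mem B'))

noncomputable def rep (j : α) : α := π.blockRep (π.blockOf j)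

lemma rep_mem_part (j : α) : π.rep j ∈ π.part j := π.blockRep_mem _

lemma part_rep (j : α) : π.part (π.rep j) = π.part j :=
  π.part_eq_of_mem (π.part_mem.2 (mem_univ j)) (π.rep_mem_part j)

lemma mem_part_rep (j : α) : j ∈ π.part (π.rep j) := by
  rw [part_rep]
  exact π.mem_part (mem_univ j)

lemma rep_eq_of_mem_part {j j' : α} (h : j' ∈ π.part j) : π.rep j' = π.rep j := by
  rw [rep, π.blockOf_eq (B := π.blockOf j) h, rep]

lemma rep_rep (j : α) : π.rep (π.rep j) = π.rep j := π.rep_eq_of_mem_part (π.rep_mem_part j)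

lemma card_filter_rep_eq_false
    [DecidablePred fun ε : α → Bool => ∀ j, ε (π.rep j) = false] :
    #{ε : α → Bool | ∀ j, ε (π.rep j) = false} = 2 ^ (Fintype.card α - #π.parts) := by
  have himage : univ.image π.rep = univ.image π.blockRep := by
    rw [show π.rep = π.blockRep ∘ π.blockOf from rfl, ← image_image,
      image_univ_of_surjective fun B => ⟨_, π.blockOf_eq (π.blockRep_mem B)⟩]
  have hcard : #(univ.image π.rep) = #π.parts := by
    rw [himage, card_image_of_injective _ π.blockRep_injective, card_univ, Fintype.card_coe]
  rw [← hcard, ← card_filter_forall_mem_eq_false]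
  simp only [forall_mem_image, mem_univ, forall_const]

def IsOrbitPartition (σ : Perm α) : Prop :=
  ∀ j j', j' ∈ π.part j ↔ σ.SameCycle j j'

variable {π} {σ : Perm α}

lemma IsOrbitPartition.apply_ne (h : π.IsOrbitPartition σ) (hπ : ∀ B ∈ π.parts, 2 ≤ #B)
    (j : α) : σ j ≠ j := by
  intro hj
  obtain ⟨j', hj', hne⟩ := exists_mem_ne (hπ _ (π.part_mem.2 (mem_univ j))) j
  obtain ⟨i, rfl⟩ := (h j j').1 hj'
  exact hne (zpow_apply_eq_self_of_apply_eq_self hj i)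

lemma IsOrbitPartition.cycleOf_blockRep_apply (h : π.IsOrbitPartition σ) (B : π.parts) (j : α) :
    σ.cycleOf (π.blockRep B) j = if j ∈ (B : Finset α) then σ j else j := by
  have hB : σ.SameCycle (π.blockRep B) j ↔ j ∈ (B : Finset α) := by
    rw [← h, π.part_eq_of_mem B.2 (π.blockRep_mem B)]
  simp only [cycleOf_apply, hB]

lemma IsOrbitPartition.isCycle_and_support_cycleOf_blockRep (h : π.IsOrbitPartition σ)
    (hπ : ∀ B ∈ π.parts, 2 ≤ #B) (B : π.parts) :
    (σ.cycleOf (π.blockRep B)).IsCycle ∧ (σ.cycleOf (π.blockRep B)).support = B := by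
  refine ⟨isCycle_cycleOf _ (h.apply_ne hπ _), ?_⟩
  ext j
  rw [mem_support, h.cycleOf_blockRep_apply]
  split_ifs with hj
  · simpa [hj] using h.apply_ne hπ j
  · simp [hj]

variable {g : π.parts → Perm α}

lemma gluePerm_injective (hg : ∀ B, (g B).support ⊆ B) :
    Function.Injective fun j => g (π.blockOf j) j := by
  intro j j' hjj'
  simp only at hjj'
  have hblock : π.blockOf j = π.blockOf j' := by
    rw [← π.blockOf_eq ((isInvariant_of_support_le (hg _) _).2 (π.mem_blockOf j)), hjj',
      π.blockOf_eq ((isInvariant_of_support_le (hg _) _).2 (π.mem_blockOf j'))]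
  rw [hblock] at hjj'
  exact (g _).injective hjj'

variable (π) in
noncomputable def gluePerm (g : π.parts → Perm α) (hg : ∀ B, (g B).support ⊆ B) : Perm α :=
  Equiv.ofBijective _ (Finite.injective_iff_bijective.1 (gluePerm_injective hg))

lemma gluePerm_pow_apply (hg : ∀ B, (g B).support ⊆ B) {B : π.parts} {j : α}
    (hj : j ∈ (B : Finset α)) (n : ℕ) : (π.gluePerm g hg ^ n) j = (g B ^ n) j := by
  induction n with
  | zero => rfl
  | succ n ih =>
    have hmem : (g B ^ n) j ∈ (B : Finset α) :=
      (isInvariant_of_support_le ((support_pow_le _ n).trans (hg B)) _).2 hj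
    rw [pow_succ', Perm.mul_apply, ih, pow_succ', Perm.mul_apply, gluePerm, ofBijective_apply,
      π.blockOf_eq hmem]

lemma isOrbitPartition_gluePerm (hg : ∀ B, (g B).IsCycle ∧ (g B).support = B) :
    π.IsOrbitPartition (π.gluePerm g fun B => (hg B).2.le) := by
  intro j j'
  have hj := π.mem_blockOf j
  constructor
  · intro hj'
    have hmoved : ∀ x ∈ π.part j, g (π.blockOf j) x ≠ x := fun x hx =>
      mem_support.1 (by rwa [(hg _).2])
    obtain ⟨n, hn⟩ := ((hg _).1.sameCycle (hmoved j hj) (hmoved j' hj')).exists_nat_pow_eq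
    exact ⟨n, by rw [zpow_natCast, gluePerm_pow_apply _ hj, hn]⟩
  · intro hs
    obtain ⟨n, rfl⟩ := hs.exists_nat_pow_eq
    rw [gluePerm_pow_apply _ hj]
    exact (isInvariant_of_support_le ((support_pow_le _ n).trans (hg _).2.le) _).2 hj

theorem card_isOrbitPartition (hπ : ∀ B ∈ π.parts, 2 ≤ #B) :
    #{σ : Perm α | π.IsOrbitPartition σ} =
      ∏ B ∈ π.parts, #{σ : Perm α | σ.IsCycle ∧ σ.support = B} := by
  rw [← prod_coe_sort, ← Fintype.card_piFinset]
  refine card_bij (fun σ _ B => σ.cycleOf (π.blockRep B)) ?_ ?_ ?_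
  · intro σ hσ
    simp only [mem_filter, mem_univ, true_and, Fintype.mem_piFinset] at hσ ⊢
    exact hσ.isCycle_and_support_cycleOf_blockRep hπ
  · intro σ hσ σ' hσ' heq
    simp only [mem_filter, mem_univ, true_and] at hσ hσ'
    ext j
    have := congrArg (fun c => c (π.blockOf j) j) heq
    simpa [hσ.cycleOf_blockRep_apply, hσ'.cycleOf_blockRep_apply, π.mem_blockOf j] using this
  · intro g hg
    simp only [mem_filter, mem_univ, true_and, Fintype.mem_piFinset] at hg
    have hglue := isOrbitPartition_gluePerm hg
    refine ⟨_, mem_filter.2 ⟨mem_univ _, hglue⟩, funext fun B => Equiv.ext fun j => ?_⟩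
    rw [hglue.cycleOf_blockRep_apply]
    split_ifs with hj
    · rw [← pow_one (π.gluePerm g _), gluePerm_pow_apply _ hj, pow_one]
    · rw [eq_comm, ← notMem_support, (hg B).2]
      exact hj

end Finpartition

namespace FeynmanDiagram

variable {k : ℕ} {M : Perm (Fin k × Bool)} {σ : Perm (Fin k)} {ε : Fin k → Bool}

def tracePerm (M : Perm (Fin k × Bool)) : Perm (Fin k × Bool) := M.trans (copyFlip k)

lemma tracePerm_apply (x : Fin k × Bool) : tracePerm M x = ((M x).1, !(M x).2) := rfl

lemma copyFlip_apply (x : Fin k × Bool) : copyFlip k x = (x.1, !x.2) := rfl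

lemma copyFlip_inv : (copyFlip k)⁻¹ = copyFlip k := rfl

lemma conj_tracePerm (hM : ∀ x, M (M x) = x) :
    copyFlip k * tracePerm M * (copyFlip k)⁻¹ = (tracePerm M)⁻¹ := by
  ext x : 1
  rw [eq_comm, Perm.inv_eq_iff_eq]
  simp [copyFlip_inv, copyFlip_apply, tracePerm_apply, hM]

lemma sameCycle_copyFlip_iff (hM : ∀ x, M (M x) = x) {x y : Fin k × Bool} :
    (tracePerm M).SameCycle (copyFlip k x) (copyFlip k y) ↔ (tracePerm M).SameCycle x y := by
  rw [← sameCycle_inv (f := tracePerm M) (x := x), ← conj_tracePerm hM, sameCycle_conj,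
    copyFlip_inv]

lemma copyFlip_zpow_apply (hM : ∀ x, M (M x) = x) (i : ℤ) (x : Fin k × Bool) :
    copyFlip k ((tracePerm M ^ i) x) = (tracePerm M ^ (-i)) (copyFlip k x) := by
  have h : copyFlip k * tracePerm M ^ i * (copyFlip k)⁻¹ = tracePerm M ^ (-i) := by
    rw [← conj_zpow, conj_tracePerm hM, inv_zpow, zpow_neg]
  rw [← h, copyFlip_inv]
  simp [copyFlip_apply]

lemma not_sameCycle_copyFlip (hM : M ∈ feynmanDiagrams k) (x : Fin k × Bool) :
    ¬ (tracePerm M).SameCycle x (copyFlip k x) := by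
  obtain ⟨hinv, hlabel⟩ := (mem_filter.1 hM).2
  rintro ⟨i, hi⟩
  -- As `copyFlip` conjugates `tracePerm M` to its inverse, the midpoint `(tracePerm M ^ t) x` of
  -- the path from `x` to `copyFlip k x` is fixed by `copyFlip` (length `2 t`) or `M` (`2 t + 1`).
  obtain ⟨t, rfl | rfl⟩ := Int.even_or_odd' i
  · have hfix : copyFlip k ((tracePerm M ^ t) x) = (tracePerm M ^ t) x := by
      rw [copyFlip_zpow_apply hinv, ← hi, ← Perm.mul_apply, ← zpow_add,
        show -t + 2 * t = t by ring]
    simpa [copyFlip_apply] using congrArg Prod.snd hfix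
  · have hstep : copyFlip k ((tracePerm M ^ t) x) = tracePerm M ((tracePerm M ^ t) x) := by
      rw [copyFlip_zpow_apply hinv, ← hi, ← Perm.mul_apply, ← zpow_add, ← Perm.mul_apply,
        ← zpow_one_add, show -t + (2 * t + 1) = 1 + t by ring]
    exact hlabel _ (congrArg Prod.fst hstep).symm

lemma inducesPartition_iff {π : Finpartition (univ : Finset (Fin k))} :
    inducesPartition k M π ↔
      ∀ j j', j' ∈ π.part j ↔ ∃ b, (tracePerm M).SameCycle (j, false) (j', b) := by
  refine forall₂_congr fun j j' => iff_congr Iff.rfl ⟨?_, ?_⟩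
  · rintro ⟨m, rfl⟩
    exact ⟨_, m, by rw [zpow_natCast]; rfl⟩
  · rintro ⟨b, h⟩
    obtain ⟨m, hm⟩ := h.exists_nat_pow_eq
    exact ⟨m, congrArg Prod.fst hm⟩

lemma exists_sameCycle_iff (hM : ∀ x, M (M x) = x) (j j' : Fin k) (c : Bool) :
    (∃ b, (tracePerm M).SameCycle (j, false) (j', b)) ↔
      ∃ b, (tracePerm M).SameCycle (j, c) (j', b) := by
  cases c
  · rfl
  · constructor <;> rintro ⟨b, h⟩ <;> refine ⟨!b, ?_⟩
    · exact (sameCycle_copyFlip_iff hM).2 h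
    · simpa [copyFlip_apply] using (sameCycle_copyFlip_iff hM).2 h

lemma tracePerm_pow_apply (h : ∀ j, M (j, ε j) = (σ j, !ε (σ j))) (n : ℕ) (j : Fin k) :
    (tracePerm M ^ n) (j, ε j) = ((σ ^ n) j, ε ((σ ^ n) j)) := by
  induction n with
  | zero => rfl
  | succ n ih =>
    rw [pow_succ', Perm.mul_apply, ih, tracePerm_apply, h, pow_succ', Perm.mul_apply,
      Bool.not_not]

lemma sameCycle_tracePerm_iff (h : ∀ j, M (j, ε j) = (σ j, !ε (σ j))) (j j' : Fin k) (b : Bool) :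
    (tracePerm M).SameCycle (j, ε j) (j', b) ↔ σ.SameCycle j j' ∧ b = ε j' := by
  constructor
  · intro hs
    obtain ⟨n, hn⟩ := hs.exists_nat_pow_eq
    rw [tracePerm_pow_apply h, Prod.mk.injEq] at hn
    obtain ⟨rfl, rfl⟩ := hn
    exact ⟨sameCycle_pow_right.2 (SameCycle.refl _ _), rfl⟩
  · rintro ⟨hs, rfl⟩
    obtain ⟨n, rfl⟩ := hs.exists_nat_pow_eq
    exact ⟨n, by rw [zpow_natCast, tracePerm_pow_apply h]⟩

noncomputable def matchOf (σ : Perm (Fin k)) (ε : Fin k → Bool) : Perm (Fin k × Bool) :=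
  Function.Involutive.toPerm
    (fun x => if x.2 = ε x.1 then (σ x.1, !ε (σ x.1)) else (σ⁻¹ x.1, ε (σ⁻¹ x.1)))
    (by
      rintro ⟨j, b⟩
      by_cases hb : b = ε j
      · simp [hb]
      · simp [Bool.eq_not.2 hb])

lemma matchOf_matchOf (x : Fin k × Bool) : matchOf σ ε (matchOf σ ε x) = x :=
  Function.Involutive.toPerm_involutive _ x

lemma matchOf_apply_self (σ : Perm (Fin k)) (ε : Fin k → Bool) (j : Fin k) :
    matchOf σ ε (j, ε j) = (σ j, !ε (σ j)) := by
  simp [matchOf]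

lemma matchOf_apply_of_ne {j : Fin k} {b : Bool} (hb : b ≠ ε j) :
    matchOf σ ε (j, b) = (σ⁻¹ j, ε (σ⁻¹ j)) := by
  simp [matchOf, hb]

lemma matchOf_mem (hσ : ∀ j, σ j ≠ j) : matchOf σ ε ∈ feynmanDiagrams k := by
  refine mem_filter.2 ⟨mem_univ _, matchOf_matchOf, ?_⟩
  rintro ⟨j, b⟩
  by_cases hb : b = ε j
  · simpa [hb, matchOf_apply_self] using hσ j
  · rw [matchOf_apply_of_ne hb]
    exact fun h => hσ j (Perm.inv_eq_iff_eq.1 h).symm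

lemma eq_matchOf (hM : ∀ x, M (M x) = x) (h : ∀ j, M (j, ε j) = (σ j, !ε (σ j))) :
    M = matchOf σ ε := by
  ext ⟨j, b⟩ : 1
  by_cases hb : b = ε j
  · rw [hb, h, matchOf_apply_self]
  · have hpartner : M (σ⁻¹ j, ε (σ⁻¹ j)) = (j, b) := by
      rw [h, Bool.eq_not.2 hb]
      simp
    rw [← hpartner, hM, hpartner, matchOf_apply_of_ne hb]

variable (π : Finpartition (univ : Finset (Fin k)))

lemma inducesPartition_matchOf (h : π.IsOrbitPartition σ) :
    inducesPartition k (matchOf σ ε) π := by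
  refine inducesPartition_iff.2 fun j j' => ?_
  rw [exists_sameCycle_iff matchOf_matchOf j j' (ε j)]
  simp only [sameCycle_tracePerm_iff (matchOf_apply_self σ ε), exists_eq_right, h j j']

/-- Under `inducesPartition k M π`, the copy of `j` lying on the `tracePerm M`-cycle through
`(π.rep j, false)` (see `sameCycle_rep_iff_eq_sectionOf`). -/
noncomputable def sectionOf (M : Perm (Fin k × Bool)) (j : Fin k) : Bool :=
  !decide ((tracePerm M).SameCycle (π.rep j, false) (j, false))

lemma sectionOf_matchOf (h : π.IsOrbitPartition σ) (hε : ∀ j, ε (π.rep j) = false) :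
    sectionOf π (matchOf σ ε) = ε := by
  funext j
  have hcycle := sameCycle_tracePerm_iff (matchOf_apply_self σ ε) (π.rep j) j false
  rw [hε, ← h, and_iff_right (π.mem_part_rep j)] at hcycle
  cases hj : ε j <;> simp [sectionOf, hcycle, hj]

variable {π}

lemma sameCycle_rep_iff_eq_sectionOf (hM : M ∈ feynmanDiagrams k) (hind : inducesPartition k M π)
    (j : Fin k) (b : Bool) :
    (tracePerm M).SameCycle (π.rep j, false) (j, b) ↔ b = sectionOf π M j := by
  obtain ⟨b', hb'⟩ := (inducesPartition_iff.1 hind (π.rep j) j).1 (π.mem_part_rep j)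
  cases b
  · simp [sectionOf]
  · have hflip := not_sameCycle_copyFlip hM (j, false)
    simp only [sectionOf, Bool.true_eq, Bool.not_eq_eq_eq_not, Bool.not_true,
      decide_eq_false_iff_not]
    refine ⟨fun h hS => hflip (hS.symm.trans h), fun hS => ?_⟩
    cases b'
    · exact absurd hb' hS
    · exact hb'

lemma sameCycle_rep_iff (hM : M ∈ feynmanDiagrams k) (hind : inducesPartition k M π)
    (j : Fin k) (y : Fin k × Bool) :
    (tracePerm M).SameCycle (π.rep j, false) y ↔ y.1 ∈ π.part j ∧ y.2 = sectionOf π M y.1 := by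
  constructor
  · intro h
    have hy : y.1 ∈ π.part j := by
      rw [← π.part_rep, inducesPartition_iff.1 hind]
      exact ⟨y.2, h⟩
    refine ⟨hy, (sameCycle_rep_iff_eq_sectionOf hM hind y.1 y.2).1 ?_⟩
    rwa [π.rep_eq_of_mem_part hy]
  · rintro ⟨hy, hy2⟩
    have h := (sameCycle_rep_iff_eq_sectionOf hM hind y.1 y.2).2 hy2
    rwa [π.rep_eq_of_mem_part hy] at h

lemma sectionOf_rep (hM : M ∈ feynmanDiagrams k) (hind : inducesPartition k M π) (j : Fin k) :
    sectionOf π M (π.rep j) = false := by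
  refine ((sameCycle_rep_iff_eq_sectionOf hM hind _ false).1 ?_).symm
  rw [π.rep_rep]

lemma sameCycle_rep_sectionOf (hM : M ∈ feynmanDiagrams k) (hind : inducesPartition k M π)
    (j : Fin k) : (tracePerm M).SameCycle (π.rep j, false) (j, sectionOf π M j) :=
  (sameCycle_rep_iff hM hind j _).2 ⟨π.mem_part (mem_univ j), rfl⟩

lemma sameCycle_sectionOf_iff (hM : M ∈ feynmanDiagrams k) (hind : inducesPartition k M π)
    (j j' : Fin k) :
    (tracePerm M).SameCycle (j, sectionOf π M j) (j', sectionOf π M j') ↔ j' ∈ π.part j := by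
  have hj := sameCycle_rep_sectionOf hM hind j
  have hrep := sameCycle_rep_iff hM hind j (j', sectionOf π M j')
  simp only [and_true] at hrep
  rw [← hrep]
  exact ⟨hj.trans, hj.symm.trans⟩

lemma apply_sectionOf (hM : M ∈ feynmanDiagrams k) (hind : inducesPartition k M π) (j : Fin k) :
    M (j, sectionOf π M j) =
      ((M (j, sectionOf π M j)).1, !sectionOf π M (M (j, sectionOf π M j)).1) := by
  have h := ((sameCycle_rep_iff hM hind j _).1
    (sameCycle_apply_right.2 (sameCycle_rep_sectionOf hM hind j))).2
  rw [tracePerm_apply, Bool.not_eq_eq_eq_not] at h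
  exact Prod.ext rfl h

lemma exists_eq_matchOf (hM : M ∈ feynmanDiagrams k) (hind : inducesPartition k M π) :
    ∃ σ, π.IsOrbitPartition σ ∧ M = matchOf σ (sectionOf π M) := by
  have hinj : Function.Injective fun j => (M (j, sectionOf π M j)).1 := fun j j' hjj' => by
    have hM' : M (j, sectionOf π M j) = M (j', sectionOf π M j') := by
      rw [apply_sectionOf hM hind j, apply_sectionOf hM hind j']
      simp only at hjj'
      rw [hjj']
    exact congrArg Prod.fst (M.injective hM')
  set σ := Equiv.ofBijective _ (Finite.injective_iff_bijective.1 hinj)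
  have hσ : ∀ j, M (j, sectionOf π M j) = (σ j, !sectionOf π M (σ j)) :=
    apply_sectionOf hM hind
  refine ⟨σ, fun j j' => ?_, eq_matchOf (mem_filter.1 hM).2.1 hσ⟩
  rw [← sameCycle_sectionOf_iff hM hind, sameCycle_tracePerm_iff hσ, and_iff_left rfl]

theorem card_filter_inducesPartition (hπ : ∀ B ∈ π.parts, 2 ≤ #B) :
    #{M ∈ feynmanDiagrams k | inducesPartition k M π} =
      #{σ : Perm (Fin k) | π.IsOrbitPartition σ} *
        #{ε : Fin k → Bool | ∀ j, ε (π.rep j) = false} := by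
  rw [← card_product, eq_comm]
  refine card_bij (fun (p : Perm (Fin k) × (Fin k → Bool)) _ => matchOf p.1 p.2) ?_ ?_ ?_
  · rintro ⟨σ, ε⟩ hp
    simp only [mem_product, mem_filter, mem_univ, true_and] at hp
    exact mem_filter.2 ⟨matchOf_mem (hp.1.apply_ne hπ), inducesPartition_matchOf π hp.1⟩
  · rintro ⟨σ, ε⟩ hp ⟨σ', ε'⟩ hp' heq
    simp only [mem_product, mem_filter, mem_univ, true_and] at hp hp' heq
    obtain rfl : ε = ε' := by
      rw [← sectionOf_matchOf π hp.1 hp.2, heq, sectionOf_matchOf π hp'.1 hp'.2]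
    refine Prod.ext (Equiv.ext fun j => ?_) rfl
    simpa [matchOf_apply_self] using congrArg (fun M => (M (j, ε j)).1) heq
  · intro M hM
    obtain ⟨hM, hind⟩ := mem_filter.1 hM
    obtain ⟨σ, hσ, hMσ⟩ := exists_eq_matchOf hM hind
    refine ⟨(σ, sectionOf π M), ?_, hMσ.symm⟩
    simp [hσ, sectionOf_rep hM hind]

end FeynmanDiagram

theorem gradient_squared_stmt19_general (k : ℕ)
    (π : Finpartition (Finset.univ : Finset (Fin k)))
    (hπ : ∀ B ∈ π.parts, 2 ≤ B.card) :
    (∃ M ∈ feynmanDiagrams k, inducesPartition k M π) ∧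
      ((feynmanDiagrams k).filter (fun M => inducesPartition k M π)).card
        = ∏ B ∈ π.parts, 2 ^ (B.card - 1) *
            ((Finset.univ : Finset (Equiv.Perm (Fin k))).filter
              (fun σ => σ.IsCycle ∧ σ.support = B)).card := by
  have hcount : #{M ∈ feynmanDiagrams k | inducesPartition k M π} =
      ∏ B ∈ π.parts, 2 ^ (#B - 1) * #{σ : Perm (Fin k) | σ.IsCycle ∧ σ.support = B} := by
    rw [FeynmanDiagram.card_filter_inducesPartition hπ, π.card_isOrbitPartition hπ,
      π.card_filter_rep_eq_false,
      ← π.prod_two_pow_card_sub_one, prod_mul_distrib, mul_comm]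
  have hpos : 0 < #{M ∈ feynmanDiagrams k | inducesPartition k M π} := by
    rw [hcount]
    refine prod_pos fun B hB => mul_pos (by positivity) (card_pos.2 ?_)
    obtain ⟨σ, hσ⟩ := exists_isCycle_support_eq (hπ B hB)
    exact ⟨σ, mem_filter.2 ⟨mem_univ σ, hσ⟩⟩
  obtain ⟨M, hM⟩ := card_pos.1 hpos
  exact ⟨⟨M, mem_filter.1 hM⟩, hcount⟩

/-- For `k ≥ 2`, every partition `π` of `{1,...,k}` into blocks of size at
least 2 is induced by some complete Feynman diagram (so the induced cycle structures exhaust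
the fixed-point-free permutation cycle types), and the number of diagrams inducing `π` is
`∏_{B ∈ π} 2^{|B|-1} · #(full cyclic orders on B)`. -/
theorem gradient_squared_stmt19 (k : ℕ) (hk : 2 ≤ k)
    (π : Finpartition (Finset.univ : Finset (Fin k)))
    (hπ : ∀ B ∈ π.parts, 2 ≤ B.card) :
    (∃ M ∈ feynmanDiagrams k, inducesPartition k M π) ∧
      ((feynmanDiagrams k).filter (fun M => inducesPartition k M π)).card
        = ∏ B ∈ π.parts, 2 ^ (B.card - 1) *
            ((Finset.univ : Finset (Equiv.Perm (Fin k))).filter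
              (fun σ => σ.IsCycle ∧ σ.support = B)).card :=
  gradient_squared_stmt19_general k π hπ
end
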